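/- Let n ≥ 1 and σ > 0. Let f : ℝⁿ → ℝ be twice continuously differentiable with ∇f Lipschitz with constant L_f > 0, let Z = ∫ e^{−f(x)} dx ∈ (0, ∞) and π(x) = e^{−f(x)}/Z, and let ν : ℝⁿ → ℝ be an everywhere positive, continuously differentiable probability density with ∫ ‖∇f‖² ν < ∞ and ∫ ‖∇log ν‖² ν < ∞, satisfying ∫_{ℝⁿ} div(∇f(x) ν(x)) dx = 0. Let g : ℝⁿ → ℝ be differentiable, let p : ℝⁿ → (0, ∞) be positive and differentiable with ∇f = ∇g − ∇log p, let S : ℝⁿ → ℝⁿ satisfy ‖S(y)‖ ≤ R_s for all y, let q_σ : ℝⁿ → ℝⁿ satisfy ‖S(y) − q_σ(y)‖ ≤ ε_σ and ‖q_σ(y) − ∇log p(y)‖ ≤ σ C for all y, and let α ≥ 1. Then the annealed PMC-RED drift G_α(x) = ∇g(x) − α S(x) satisfies ∫_{ℝⁿ} ‖G_α(x)‖² ν(x) dx ≤ 2 FI(ν‖π) + 4 n L_f + 2 (σ C + ε_σ + (α − 1) R_s)². -/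

import Mathlib

open MeasureTheory Real

/-- Divergence of a vector field on `ℝⁿ`: `div V = ∑ i, ∂Vᵢ/∂xᵢ`. -/
noncomputable def diverg {n : ℕ}
    (V : EuclideanSpace ℝ (Fin n) → EuclideanSpace ℝ (Fin n))
    (x : EuclideanSpace ℝ (Fin n)) : ℝ :=
  ∑ i, fderiv ℝ V x (EuclideanSpace.single i (1 : ℝ)) i

/-- Relative Fisher information
`FI(ν‖π) = ∫ ‖∇log ν(x) − ∇log π(x)‖² ν(x) dx`. -/
noncomputable def fisherInfo {n : ℕ}
    (ν piD : EuclideanSpace ℝ (Fin n) → ℝ) : ℝ :=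
  ∫ x, ‖gradient (fun y => Real.log (ν y)) x
        - gradient (fun y => Real.log (piD y)) x‖ ^ 2 * ν x

/-!
Writing `∇g − α S = ∇f + (∇log p − q_σ) + (q_σ − S) − (α − 1) S` bounds the drift pointwise by
`‖∇f‖ + (σ C + ε_σ + (α − 1) R_s)`, so its second moment is at most
`2 ∫ ‖∇f‖² ν + 2 (σ C + ε_σ + (α − 1) R_s)²`. Since `∇log π = −∇f`, expanding the square in
`FI(ν‖π) = ∫ ‖∇log ν + ∇f‖² ν` gives `∫ ‖∇f‖² ν ≤ FI(ν‖π) − 2 ∫ ⟪∇ν, ∇f⟫`, and the vanishing of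
`∫ div (ν ∇f)` turns the cross term into `∫ ν Δf`, which is at most `n L_f` because `∇f` is
`L_f`-Lipschitz.
-/

open InnerProductSpace
open scoped NNReal

section Gradient

variable {E : Type*} [NormedAddCommGroup E] [InnerProductSpace ℝ E] [CompleteSpace E]

theorem ContDiff.gradient {f : E → ℝ} {k m : WithTop ℕ∞} (hf : ContDiff ℝ k f)
    (hmk : m + 1 ≤ k) : ContDiff ℝ m (gradient f) :=
  (toDual ℝ E).symm.contDiff.comp (hf.fderiv_right hmk)

theorem inner_gradient_log_mul_self {ν : E → ℝ} {x : E} (hx : 0 < ν x)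
    (hν : DifferentiableAt ℝ ν x) (v : E) :
    ⟪gradient (fun y => log (ν y)) x, v⟫_ℝ * ν x = fderiv ℝ ν x v := by
  rw [inner_gradient_left, fderiv.log hν hx.ne', smul_apply, smul_eq_mul, mul_comm,
    mul_inv_cancel_left₀ hx.ne']

theorem gradient_log_exp_neg_div (f : E → ℝ) {Z : ℝ} (hZ : Z ≠ 0) (x : E) :
    gradient (fun y => log (exp (-f y) / Z)) x = -gradient f x := by
  have hlog : (fun y => log (exp (-f y) / Z)) = fun y => -f y - log Z := by
    funext y
    rw [log_div (exp_ne_zero _) hZ, log_exp]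
  rw [hlog, gradient, fderiv_sub_const, fderiv_fun_neg, map_neg, gradient]

end Gradient

section Divergence

variable {n : ℕ}

theorem measurable_diverg (V : EuclideanSpace ℝ (Fin n) → EuclideanSpace ℝ (Fin n)) :
    Measurable (diverg V) := by
  unfold diverg
  fun_prop

theorem abs_diverg_le_of_lipschitzWith {V : EuclideanSpace ℝ (Fin n) → EuclideanSpace ℝ (Fin n)}
    {K : ℝ≥0} (hV : LipschitzWith K V) (x : EuclideanSpace ℝ (Fin n)) :
    |diverg V x| ≤ n * K := by
  have hentry (i : Fin n) : |fderiv ℝ V x (EuclideanSpace.single i 1) i| ≤ K :=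
    calc |fderiv ℝ V x (EuclideanSpace.single i 1) i|
        ≤ ‖fderiv ℝ V x (EuclideanSpace.single i 1)‖ := by
          simpa using PiLp.norm_apply_le (fderiv ℝ V x (EuclideanSpace.single i 1)) i
      _ ≤ ‖fderiv ℝ V x‖ * ‖EuclideanSpace.single i (1 : ℝ)‖ := (fderiv ℝ V x).le_opNorm _
      _ ≤ K := by simpa using norm_fderiv_le_of_lipschitz ℝ hV (x₀ := x)
  calc |diverg V x| ≤ ∑ i, |fderiv ℝ V x (EuclideanSpace.single i 1) i| :=
        Finset.abs_sum_le_sum_abs _ _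
    _ ≤ ∑ _i : Fin n, (K : ℝ) := Finset.sum_le_sum fun i _ => hentry i
    _ = n * K := by simp

theorem sum_apply_single_mul (ℓ : EuclideanSpace ℝ (Fin n) →L[ℝ] ℝ)
    (v : EuclideanSpace ℝ (Fin n)) :
    ∑ i, ℓ (EuclideanSpace.single i 1) * v i = ℓ v := by
  conv_rhs => rw [← (EuclideanSpace.basisFun (Fin n) ℝ).sum_repr v]
  simp [map_sum, mul_comm]

theorem diverg_smul {ν : EuclideanSpace ℝ (Fin n) → ℝ}
    {V : EuclideanSpace ℝ (Fin n) → EuclideanSpace ℝ (Fin n)} {x : EuclideanSpace ℝ (Fin n)}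
    (hν : DifferentiableAt ℝ ν x) (hV : DifferentiableAt ℝ V x) :
    diverg (fun y => ν y • V y) x = fderiv ℝ ν x (V x) + ν x * diverg V x := by
  simp only [diverg, fderiv_fun_smul hν hV]
  simp [Finset.sum_add_distrib, ← Finset.mul_sum, sum_apply_single_mul, add_comm]

end Divergence

theorem norm_add_sub_smul_le {F : Type*} [SeminormedAddCommGroup F] [NormedSpace ℝ F]
    {a b q s : F} {δ ε R α : ℝ} (hs : ‖s‖ ≤ R) (hsq : ‖s - q‖ ≤ ε) (hqb : ‖q - b‖ ≤ δ)
    (hα : 1 ≤ α) :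
    ‖a + b - α • s‖ ≤ ‖a‖ + (δ + ε + (α - 1) * R) := by
  have hsplit : a + b - α • s = a - (q - b) - (s - q) - (α - 1) • s := by module
  have hαs : ‖(α - 1) • s‖ ≤ (α - 1) * R := by
    rw [norm_smul, norm_of_nonneg (sub_nonneg.mpr hα)]
    exact mul_le_mul_of_nonneg_left hs (sub_nonneg.mpr hα)
  rw [hsplit]
  linarith [norm_sub_le (a - (q - b) - (s - q)) ((α - 1) • s), norm_sub_le (a - (q - b)) (s - q),
    norm_sub_le a (q - b)]

theorem integral_sq_norm_mul_le_of_norm_le_add {α F : Type*} [MeasurableSpace α]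
    {μ : Measure α} [SeminormedAddCommGroup F] {G H : α → F} {w : α → ℝ} {c : ℝ}
    (hw0 : ∀ x, 0 ≤ w x) (hw1 : ∫ x, w x ∂μ = 1)
    (hH : Integrable (fun x => ‖H x‖ ^ 2 * w x) μ) (hGH : ∀ x, ‖G x‖ ≤ ‖H x‖ + c) :
    ∫ x, ‖G x‖ ^ 2 * w x ∂μ ≤ 2 * (∫ x, ‖H x‖ ^ 2 * w x ∂μ) + 2 * c ^ 2 := by
  have hw : Integrable w μ := Integrable.of_integral_ne_zero (by simp [hw1])
  have hpt (x : α) : ‖G x‖ ^ 2 * w x ≤ 2 * (‖H x‖ ^ 2 * w x) + 2 * c ^ 2 * w x := by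
    have hsq : ‖G x‖ ^ 2 ≤ 2 * (‖H x‖ ^ 2 + c ^ 2) :=
      (pow_le_pow_left₀ (norm_nonneg _) (hGH x) 2).trans add_sq_le
    nlinarith [hw0 x]
  calc ∫ x, ‖G x‖ ^ 2 * w x ∂μ ≤ ∫ x, 2 * (‖H x‖ ^ 2 * w x) + 2 * c ^ 2 * w x ∂μ :=
        integral_mono_of_nonneg (ae_of_all _ fun x => mul_nonneg (by positivity) (hw0 x))
          ((hH.const_mul 2).add (hw.const_mul _)) (ae_of_all _ hpt)
    _ = 2 * (∫ x, ‖H x‖ ^ 2 * w x ∂μ) + 2 * c ^ 2 := by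
        rw [integral_add (hH.const_mul 2) (hw.const_mul _), integral_const_mul,
          integral_const_mul, hw1, mul_one]

theorem fisherInfo_eq_of_eq_exp_neg_div {n : ℕ} {ν piD f : EuclideanSpace ℝ (Fin n) → ℝ}
    {Z : ℝ} (hZ : Z ≠ 0) (hpiD : ∀ x, piD x = exp (-f x) / Z) :
    fisherInfo ν piD = ∫ x, ‖gradient (fun y => log (ν y)) x + gradient f x‖ ^ 2 * ν x := by
  obtain rfl : piD = fun x => exp (-f x) / Z := funext hpiD
  simp only [fisherInfo, gradient_log_exp_neg_div f hZ, sub_neg_eq_add]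

section IntegrationByParts

variable {n : ℕ} {ν : EuclideanSpace ℝ (Fin n) → ℝ}
  {V : EuclideanSpace ℝ (Fin n) → EuclideanSpace ℝ (Fin n)}

theorem neg_mul_le_integral_fderiv_apply {K : ℝ≥0} (hν : Differentiable ℝ ν)
    (hν0 : ∀ x, 0 ≤ ν x) (hν1 : ∫ x, ν x = 1) (hV : Differentiable ℝ V)
    (hVlip : LipschitzWith K V) (hdiv : ∫ x, diverg (fun y => ν y • V y) x = 0)
    (hint : Integrable fun x => fderiv ℝ ν x (V x)) :
    -(n * K : ℝ) ≤ ∫ x, fderiv ℝ ν x (V x) := by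
  have hνint : Integrable ν := Integrable.of_integral_ne_zero (by simp [hν1])
  have hdivV := abs_diverg_le_of_lipschitzWith hVlip
  have hint' : Integrable fun x => ν x * diverg V x :=
    hνint.mul_bdd (measurable_diverg V).aestronglyMeasurable (ae_of_all _ hdivV)
  have hsum : (∫ x, fderiv ℝ ν x (V x)) + ∫ x, ν x * diverg V x = 0 := by
    rw [← integral_add hint hint', ← hdiv]
    exact integral_congr_ae (ae_of_all _ fun x => (diverg_smul (hν x) (hV x)).symm)
  have hle : ∫ x, ν x * diverg V x ≤ n * K :=
    calc ∫ x, ν x * diverg V x ≤ ∫ x, ν x * (n * K) :=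
          integral_mono hint' (hνint.mul_const _) fun x =>
            mul_le_mul_of_nonneg_left (abs_le.mp (hdivV x)).2 (hν0 x)
      _ = n * K := by rw [integral_mul_const, hν1, one_mul]
  linarith

theorem integrable_fderiv_apply (hν : Differentiable ℝ ν) (hνpos : ∀ x, 0 < ν x)
    (hV : Continuous V) (hVint : Integrable fun x => ‖V x‖ ^ 2 * ν x)
    (hscore : Integrable fun x => ‖gradient (fun y => log (ν y)) x‖ ^ 2 * ν x) :
    Integrable fun x => fderiv ℝ ν x (V x) := by
  have hmeas : Measurable fun x => fderiv ℝ ν x (V x) :=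
    Continuous.measurable2 (c := fun (L : EuclideanSpace ℝ (Fin n) →L[ℝ] ℝ) v => L v)
      (by fun_prop) (measurable_fderiv ℝ ν) hV.measurable
  refine (hVint.add hscore).mono' hmeas.aestronglyMeasurable (ae_of_all _ fun x => ?_)
  set u := gradient (fun y => log (ν y)) x
  have hcs : |⟪u, V x⟫_ℝ| ≤ ‖V x‖ ^ 2 + ‖u‖ ^ 2 := by
    nlinarith [abs_real_inner_le_norm u (V x), sq_nonneg (‖u‖ - ‖V x‖)]
  rw [← inner_gradient_log_mul_self (hνpos x) (hν x), norm_mul, norm_of_nonneg (hνpos x).le,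
    norm_eq_abs, Pi.add_apply, ← add_mul]
  exact mul_le_mul_of_nonneg_right hcs (hνpos x).le

theorem integral_sq_norm_mul_le_integral_sq_norm_gradient_log_add {K : ℝ≥0}
    (hν : Differentiable ℝ ν) (hνpos : ∀ x, 0 < ν x) (hν1 : ∫ x, ν x = 1)
    (hV : Differentiable ℝ V) (hVlip : LipschitzWith K V)
    (hdiv : ∫ x, diverg (fun y => ν y • V y) x = 0)
    (hVint : Integrable fun x => ‖V x‖ ^ 2 * ν x)
    (hscore : Integrable fun x => ‖gradient (fun y => log (ν y)) x‖ ^ 2 * ν x) :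
    ∫ x, ‖V x‖ ^ 2 * ν x
      ≤ (∫ x, ‖gradient (fun y => log (ν y)) x + V x‖ ^ 2 * ν x) + 2 * (n * K) := by
  have hint := integrable_fderiv_apply hν hνpos hV.continuous hVint hscore
  have hint₂ : Integrable fun x =>
      ‖gradient (fun y => log (ν y)) x‖ ^ 2 * ν x + 2 * fderiv ℝ ν x (V x) :=
    hscore.add (hint.const_mul 2)
  have hexpand : ∫ x, ‖gradient (fun y => log (ν y)) x + V x‖ ^ 2 * ν x
      = (∫ x, ‖gradient (fun y => log (ν y)) x‖ ^ 2 * ν x)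
        + 2 * (∫ x, fderiv ℝ ν x (V x)) + ∫ x, ‖V x‖ ^ 2 * ν x :=
    calc ∫ x, ‖gradient (fun y => log (ν y)) x + V x‖ ^ 2 * ν x
        = ∫ x, (‖gradient (fun y => log (ν y)) x‖ ^ 2 * ν x + 2 * fderiv ℝ ν x (V x))
            + ‖V x‖ ^ 2 * ν x := by
          refine integral_congr_ae (ae_of_all _ fun x => ?_)
          simp only [norm_add_sq_real, ← inner_gradient_log_mul_self (hνpos x) (hν x)]
          ring
      _ = _ := by
          rw [integral_add hint₂ hVint, integral_add hscore (hint.const_mul 2),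
            integral_const_mul]
  have hscore0 : 0 ≤ ∫ x, ‖gradient (fun y => log (ν y)) x‖ ^ 2 * ν x :=
    integral_nonneg fun x => mul_nonneg (sq_nonneg _) (hνpos x).le
  linarith [neg_mul_le_integral_fderiv_apply hν (fun x => (hνpos x).le) hν1 hV hVlip hdiv hint]

end IntegrationByParts

theorem apmc_red_drift_second_moment_bound_general {n : ℕ}
    (σ : ℝ)
    (f : EuclideanSpace ℝ (Fin n) → ℝ) (hf : ContDiff ℝ 2 f)
    (Lf : ℝ) (hLf : 0 < Lf)
    (hflip : ∀ x y, ‖gradient f x - gradient f y‖ ≤ Lf * ‖x - y‖)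
    (Z : ℝ) (hZpos : 0 < Z)
    (piD : EuclideanSpace ℝ (Fin n) → ℝ)
    (hpiD : ∀ x, piD x = Real.exp (-(f x)) / Z)
    (ν : EuclideanSpace ℝ (Fin n) → ℝ)
    (hνpos : ∀ x, 0 < ν x) (hνC1 : ContDiff ℝ 1 ν)
    (hνprob : (∫ x, ν x) = 1)
    (hint1 : Integrable (fun x => ‖gradient f x‖ ^ 2 * ν x))
    (hint2 : Integrable (fun x => ‖gradient (fun y => Real.log (ν y)) x‖ ^ 2 * ν x))
    (hdivthm : (∫ x, diverg (fun y => ν y • gradient f y) x) = 0)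
    (g : EuclideanSpace ℝ (Fin n) → ℝ)
    (p : EuclideanSpace ℝ (Fin n) → ℝ)
    (hgradf : ∀ x, gradient f x
      = gradient g x - gradient (fun y => Real.log (p y)) x)
    (S qσ : EuclideanSpace ℝ (Fin n) → EuclideanSpace ℝ (Fin n))
    (Rs εσ C α : ℝ)
    (hRs : ∀ y, ‖S y‖ ≤ Rs)
    (happrox : ∀ y, ‖S y - qσ y‖ ≤ εσ)
    (hmis : ∀ y, ‖qσ y - gradient (fun u => Real.log (p u)) y‖ ≤ σ * C)
    (hα : 1 ≤ α) :
    (∫ x, ‖gradient g x - α • S x‖ ^ 2 * ν x)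
      ≤ 2 * fisherInfo ν piD + 4 * n * Lf
        + 2 * (σ * C + εσ + (α - 1) * Rs) ^ 2 := by
  have hlip : LipschitzWith Lf.toNNReal (gradient f) :=
    LipschitzWith.of_dist_le_mul fun x y => by
      simpa [dist_eq_norm, coe_toNNReal Lf hLf.le] using hflip x y
  have hdrift : ∫ x, ‖gradient g x - α • S x‖ ^ 2 * ν x
      ≤ 2 * (∫ x, ‖gradient f x‖ ^ 2 * ν x) + 2 * (σ * C + εσ + (α - 1) * Rs) ^ 2 :=
    integral_sq_norm_mul_le_of_norm_le_add (fun x => (hνpos x).le) hνprob hint1 fun x => by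
      rw [eq_add_of_sub_eq (hgradf x).symm]
      exact norm_add_sub_smul_le (hRs x) (happrox x) (hmis x) hα
  have hscore := integral_sq_norm_mul_le_integral_sq_norm_gradient_log_add
    (hνC1.differentiable one_ne_zero) hνpos hνprob ((hf.gradient le_rfl).differentiable one_ne_zero)
    hlip hdivthm hint1 hint2
  rw [fisherInfo_eq_of_eq_exp_neg_div hZpos.ne' hpiD]
  rw [coe_toNNReal Lf hLf.le] at hscore
  linarith

theorem apmc_red_drift_second_moment_bound {n : ℕ} (hn : 1 ≤ n)
    (σ : ℝ) (hσ : 0 < σ)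
    (f : EuclideanSpace ℝ (Fin n) → ℝ) (hf : ContDiff ℝ 2 f)
    (Lf : ℝ) (hLf : 0 < Lf)
    (hflip : ∀ x y, ‖gradient f x - gradient f y‖ ≤ Lf * ‖x - y‖)
    (hexp_int : Integrable (fun x => Real.exp (-(f x))))
    (Z : ℝ) (hZ : Z = ∫ x, Real.exp (-(f x))) (hZpos : 0 < Z)
    (piD : EuclideanSpace ℝ (Fin n) → ℝ)
    (hpiD : ∀ x, piD x = Real.exp (-(f x)) / Z)
    (ν : EuclideanSpace ℝ (Fin n) → ℝ)
    (hνpos : ∀ x, 0 < ν x) (hνC1 : ContDiff ℝ 1 ν)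
    (hνprob : (∫ x, ν x) = 1)
    (hint1 : Integrable (fun x => ‖gradient f x‖ ^ 2 * ν x))
    (hint2 : Integrable (fun x => ‖gradient (fun y => Real.log (ν y)) x‖ ^ 2 * ν x))
    (hdivthm : (∫ x, diverg (fun y => ν y • gradient f y) x) = 0)
    (g : EuclideanSpace ℝ (Fin n) → ℝ) (hg : Differentiable ℝ g)
    (p : EuclideanSpace ℝ (Fin n) → ℝ)
    (hppos : ∀ x, 0 < p x) (hpd : Differentiable ℝ p)
    (hgradf : ∀ x, gradient f x
      = gradient g x - gradient (fun y => Real.log (p y)) x)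
    (S qσ : EuclideanSpace ℝ (Fin n) → EuclideanSpace ℝ (Fin n))
    (Rs εσ C α : ℝ)
    (hRs : ∀ y, ‖S y‖ ≤ Rs)
    (happrox : ∀ y, ‖S y - qσ y‖ ≤ εσ)
    (hmis : ∀ y, ‖qσ y - gradient (fun u => Real.log (p u)) y‖ ≤ σ * C)
    (hα : 1 ≤ α) :
    (∫ x, ‖gradient g x - α • S x‖ ^ 2 * ν x)
      ≤ 2 * fisherInfo ν piD + 4 * n * Lf
        + 2 * (σ * C + εσ + (α - 1) * Rs) ^ 2 :=
  apmc_red_drift_second_moment_bound_general σ f hf Lf hLf hflip Z hZpos piD hpiD ν hνpos hνC1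
    hνprob hint1 hint2 hdivthm g p hgradf S qσ Rs εσ C α hRs happrox hmis hα
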